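/- Every element of R' can be written as φ⁺(r)·(y')^l for some r ∈ R and some integer l ≥ 0; that is, R' = ⋃_{l ≥ 0} φ⁺(R)·(y')^l. -/

import Mathlib

/-!
Context: `B = ℂ[t₀,…,tₙ]`, `R = B⟨x,y⟩/(xy − yx − t₀)`,
`R' = B⟨x,y,y'⟩/(xy − yx − t₀, xy' − 1, y'x − 1)`, and `φ⁺ : R → R'` is the `B`-algebra
homomorphism with `φ⁺(x) = x`, `φ⁺(y) = y`.
Statement 4: every element of `R'` can be written as `φ⁺(r)·(y')^l` for some `r ∈ R`
and some `l ≥ 0`; that is, `R' = ⋃_{l ≥ 0} φ⁺(R)·(y')^l`.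
-/

noncomputable section

/-- The polynomial base ring `B = ℂ[t₀,…,tₙ]`. -/
abbrev Bpoly (n : ℕ) : Type := MvPolynomial (Fin (n + 1)) ℂ

/-- The defining relation `xy = yx + t₀` of `R`, with `x = ι 0`, `y = ι 1`. -/
inductive Rrel (n : ℕ) : FreeAlgebra (Bpoly n) (Fin 2) → FreeAlgebra (Bpoly n) (Fin 2) → Prop
  | comm : Rrel n (FreeAlgebra.ι (Bpoly n) 0 * FreeAlgebra.ι (Bpoly n) 1)
      (FreeAlgebra.ι (Bpoly n) 1 * FreeAlgebra.ι (Bpoly n) 0 +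
        algebraMap (Bpoly n) (FreeAlgebra (Bpoly n) (Fin 2)) (MvPolynomial.X 0))

/-- `R = B⟨x,y⟩/(xy − yx − t₀)`. -/
abbrev Rring (n : ℕ) : Type := RingQuot (Rrel n)

/-- `x ∈ R`. -/
def Rx (n : ℕ) : Rring n := RingQuot.mkAlgHom (Bpoly n) (Rrel n) (FreeAlgebra.ι (Bpoly n) 0)

/-- `y ∈ R`. -/
def Ry (n : ℕ) : Rring n := RingQuot.mkAlgHom (Bpoly n) (Rrel n) (FreeAlgebra.ι (Bpoly n) 1)

/-- The defining relations `xy = yx + t₀`, `xy' = 1`, `y'x = 1` of `R'`,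
with `x = ι 0`, `y = ι 1`, `y' = ι 2`. -/
inductive R'rel (n : ℕ) : FreeAlgebra (Bpoly n) (Fin 3) → FreeAlgebra (Bpoly n) (Fin 3) → Prop
  | comm : R'rel n (FreeAlgebra.ι (Bpoly n) 0 * FreeAlgebra.ι (Bpoly n) 1)
      (FreeAlgebra.ι (Bpoly n) 1 * FreeAlgebra.ι (Bpoly n) 0 +
        algebraMap (Bpoly n) (FreeAlgebra (Bpoly n) (Fin 3)) (MvPolynomial.X 0))
  | xinv : R'rel n (FreeAlgebra.ι (Bpoly n) 0 * FreeAlgebra.ι (Bpoly n) 2) 1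
  | invx : R'rel n (FreeAlgebra.ι (Bpoly n) 2 * FreeAlgebra.ι (Bpoly n) 0) 1

/-- `R' = B⟨x,y,y'⟩/(xy − yx − t₀, xy' − 1, y'x − 1)`. -/
abbrev R'ring (n : ℕ) : Type := RingQuot (R'rel n)

/-- `x ∈ R'`. -/
def R'x (n : ℕ) : R'ring n := RingQuot.mkAlgHom (Bpoly n) (R'rel n) (FreeAlgebra.ι (Bpoly n) 0)

/-- `y ∈ R'`. -/
def R'y (n : ℕ) : R'ring n := RingQuot.mkAlgHom (Bpoly n) (R'rel n) (FreeAlgebra.ι (Bpoly n) 1)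

/-- `y' ∈ R'`, the two-sided inverse of `x`. -/
def R'yinv (n : ℕ) : R'ring n :=
  RingQuot.mkAlgHom (Bpoly n) (R'rel n) (FreeAlgebra.ι (Bpoly n) 2)

open Fin.NatCast in
/-- `tⱼ ∈ R'` (the image of the deformation parameter `tⱼ`). -/
def R't (n : ℕ) (j : ℕ) : R'ring n :=
  algebraMap (Bpoly n) (R'ring n) (MvPolynomial.X (j : Fin (n + 1)))


theorem stmt4 (n : ℕ) (hn : 1 ≤ n)
    (φp : Rring n →ₐ[Bpoly n] R'ring n)
    (hpx : φp (Rx n) = R'x n) (hpy : φp (Ry n) = R'y n) :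
    ∀ z : R'ring n, ∃ (r : Rring n) (l : ℕ), z = φp r * R'yinv n ^ l := by
  set X := R'x n with hX
  set Y := R'y n with hYdef
  set Y' := R'yinv n with hY'
  set T0 : R'ring n := algebraMap (Bpoly n) (R'ring n) (MvPolynomial.X 0) with hT0
  set c : R'ring n := algebraMap (Bpoly n) (R'ring n) (-(MvPolynomial.X 0)) with hc
  have hmk0 : RingQuot.mkAlgHom (Bpoly n) (R'rel n) (FreeAlgebra.ι (Bpoly n) 0) = X := rfl
  have hmk1 : RingQuot.mkAlgHom (Bpoly n) (R'rel n) (FreeAlgebra.ι (Bpoly n) 1) = Y := rfl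
  have hmk2 : RingQuot.mkAlgHom (Bpoly n) (R'rel n) (FreeAlgebra.ι (Bpoly n) 2) = Y' := rfl
  have hxy : X * Y = Y * X + T0 := by
    have h := RingQuot.mkAlgHom_rel (Bpoly n) (R'rel.comm (n := n))
    simpa [map_mul, map_add, hmk0, hmk1, AlgHom.commutes] using h
  have hxy' : X * Y' = 1 := by
    have h := RingQuot.mkAlgHom_rel (Bpoly n) (R'rel.xinv (n := n))
    simpa [map_mul, map_one, hmk0, hmk2] using h
  have hy'x : Y' * X = 1 := by
    have h := RingQuot.mkAlgHom_rel (Bpoly n) (R'rel.invx (n := n))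
    simpa [map_mul, map_one, hmk0, hmk2] using h
  have hT0c : ∀ z : R'ring n, T0 * z = z * T0 := fun z => Algebra.commutes _ z
  have hcc : ∀ z : R'ring n, c * z = z * c := fun z => Algebra.commutes _ z
  have hT0N : T0 + c = 0 := by
    rw [hT0, hc, ← map_add]
    simp
  -- y y' = y' y + t0 y'^2
  have key : Y * Y' = Y' * Y + T0 * (Y' * Y') := by
    have h1 : Y' * ((X * Y) * Y') = Y' * ((Y * X + T0) * Y') := by rw [hxy]
    have lhs : Y' * ((X * Y) * Y') = Y * Y' := by
      rw [mul_assoc X Y Y', ← mul_assoc Y' X (Y * Y'), hy'x, one_mul]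
    have rhs : Y' * ((Y * X + T0) * Y') = Y' * Y + T0 * (Y' * Y') := by
      rw [add_mul, mul_add, mul_assoc Y X Y', hxy', mul_one, ← mul_assoc Y' T0 Y',
        ← hT0c Y', mul_assoc]
    rw [lhs, rhs] at h1
    exact h1
  -- y' y = y y' + (-t0) y'^2, written without subtraction
  have hy'y : Y' * Y = Y * Y' + c * (Y' * Y') := by
    rw [key, add_assoc, ← add_mul, hT0N, zero_mul, add_zero]
  have hA : ∀ k : ℕ, X ^ k * Y' ^ k = 1 := by
    intro k; induction k with
    | zero => simp
    | succ k ih =>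
      rw [pow_succ, pow_succ', mul_assoc, ← mul_assoc X Y' (Y' ^ k), hxy', one_mul, ih]
  have hD : ∀ (s : Rring n) (k j : ℕ), φp (s * Rx n ^ j) * Y' ^ (j + k) = φp s * Y' ^ k := by
    intro s k j
    rw [map_mul, map_pow, hpx, pow_add, mul_assoc, ← mul_assoc (X ^ j), hA, one_mul]
  have hPadd : ∀ z1 z2 : R'ring n, (∃ r l, z1 = φp r * Y' ^ l) →
      (∃ r l, z2 = φp r * Y' ^ l) → ∃ r l, z1 + z2 = φp r * Y' ^ l := by
    rintro _ _ ⟨r1, l1, rfl⟩ ⟨r2, l2, rfl⟩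
    have e1 : (max l1 l2 - l1) + l1 = max l1 l2 := Nat.sub_add_cancel (le_max_left _ _)
    have e2 : (max l1 l2 - l2) + l2 = max l1 l2 := Nat.sub_add_cancel (le_max_right _ _)
    have h1 := hD r1 l1 (max l1 l2 - l1); rw [e1] at h1
    have h2 := hD r2 l2 (max l1 l2 - l2); rw [e2] at h2
    exact ⟨r1 * Rx n ^ (max l1 l2 - l1) + r2 * Rx n ^ (max l1 l2 - l2), max l1 l2,
      by rw [map_add, add_mul, h1, h2]⟩
  have hE : ∀ l : ℕ, ∃ s k, Y' ^ l * Y = φp s * Y' ^ k := by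
    intro l; induction l with
    | zero => exact ⟨Ry n, 0, by simp [hpy]⟩
    | succ l ih =>
      obtain ⟨s, k, hs⟩ := ih
      have hφc : φp (algebraMap (Bpoly n) (Rring n) (-(MvPolynomial.X 0))) = c := φp.commutes _
      have step : Y' ^ (l + 1) * Y = φp s * Y' ^ (k + 1) +
          φp (algebraMap (Bpoly n) (Rring n) (-(MvPolynomial.X 0))) * Y' ^ (l + 2) := by
        calc Y' ^ (l + 1) * Y = Y' ^ l * (Y' * Y) := by rw [pow_succ, mul_assoc]
          _ = Y' ^ l * (Y * Y') + Y' ^ l * (c * (Y' * Y')) := by rw [hy'y, mul_add]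
          _ = (Y' ^ l * Y) * Y' + c * (Y' ^ l * (Y' * Y')) := by
              rw [← mul_assoc (Y' ^ l) Y Y', ← mul_assoc (Y' ^ l) c (Y' * Y'),
                ← hcc (Y' ^ l), mul_assoc c (Y' ^ l) (Y' * Y')]
          _ = (φp s * Y' ^ k) * Y' + c * Y' ^ (l + 2) := by
              rw [hs, ← pow_two, ← pow_add]
          _ = φp s * Y' ^ (k + 1) +
              φp (algebraMap (Bpoly n) (Rring n) (-(MvPolynomial.X 0))) * Y' ^ (l + 2) := by
              rw [mul_assoc, ← pow_succ, hφc]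
      obtain ⟨r, m, hr⟩ := hPadd (φp s * Y' ^ (k + 1))
        (φp (algebraMap (Bpoly n) (Rring n) (-(MvPolynomial.X 0))) * Y' ^ (l + 2))
        ⟨s, k + 1, rfl⟩ ⟨algebraMap (Bpoly n) (Rring n) (-(MvPolynomial.X 0)), l + 2, rfl⟩
      exact ⟨r, m, by rw [step, hr]⟩
  have main : ∀ a : FreeAlgebra (Bpoly n) (Fin 3), ∀ z : R'ring n,
      (∃ r l, z = φp r * Y' ^ l) →
      ∃ r l, z * RingQuot.mkAlgHom (Bpoly n) (R'rel n) a = φp r * Y' ^ l := by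
    intro a
    induction a with
    | grade0 b =>
      rintro _ ⟨r, l, rfl⟩
      refine ⟨r * algebraMap (Bpoly n) (Rring n) b, l, ?_⟩
      rw [AlgHom.commutes, map_mul, φp.commutes, mul_assoc, ← Algebra.commutes b (Y' ^ l),
        ← mul_assoc]
    | grade1 i =>
      fin_cases i
      · rintro _ ⟨r, l, rfl⟩
        show ∃ r1 l1, φp r * Y' ^ l * X = φp r1 * Y' ^ l1
        match l with
        | 0 => exact ⟨r * Rx n, 0, by simp [map_mul, hpx]⟩
        | l + 1 =>
          refine ⟨r, l, ?_⟩
          rw [pow_succ, ← mul_assoc, mul_assoc _ Y' X, hy'x, mul_one]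
      · rintro _ ⟨r, l, rfl⟩
        show ∃ r1 l1, φp r * Y' ^ l * Y = φp r1 * Y' ^ l1
        obtain ⟨s, k, hs⟩ := hE l
        exact ⟨r * s, k, by rw [mul_assoc, hs, map_mul, ← mul_assoc]⟩
      · rintro _ ⟨r, l, rfl⟩
        show ∃ r1 l1, φp r * Y' ^ l * Y' = φp r1 * Y' ^ l1
        exact ⟨r, l + 1, by rw [pow_succ, ← mul_assoc]⟩
    | mul a b iha ihb =>
      intro z hz
      rw [map_mul, ← mul_assoc]
      exact ihb _ (iha _ hz)
    | add a b iha ihb =>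
      intro z hz
      rw [map_add, mul_add]
      exact hPadd _ _ (iha _ hz) (ihb _ hz)
  intro z
  obtain ⟨a, rfl⟩ := RingQuot.mkAlgHom_surjective (Bpoly n) (R'rel n) z
  have h := main a 1 ⟨1, 0, by simp⟩
  simpa using h


end
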